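/- arXiv:2408.03529 — 2 statements merged into one kernel-verified Lean document; each statement's English description precedes it below -/
import Mathlib

section
/- If (U, R, 𝓕) is a bc-approximation space, then (𝔠(U, R, 𝓕), ⊆) is a bc-domain. -/
open Set

/-- The upper approximation operator: `upp R A = {x | ∃ y ∈ A, x R y}`. -/
def upp {U : Type*} (R : U → U → Prop) (A : Set U) : Set U := {x | ∃ y ∈ A, R x y}

/-- `(U, R, 𝓕)` is a CF-approximation space. -/
def IsCFApprox {U : Type*} (R : U → U → Prop) (𝓕 : Set (Set U)) : Prop :=
  Transitive R ∧ 𝓕.Nonempty ∧ (∀ F ∈ 𝓕, F.Finite) ∧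
    ∀ F ∈ 𝓕, ∀ K : Set U, K.Finite → K ⊆ upp R F →
      ∃ G ∈ 𝓕, K ⊆ upp R G ∧ G ⊆ upp R F

/-- `E` is a CF-closed set of `(U, R, 𝓕)`. -/
def CFClosed {U : Type*} (R : U → U → Prop) (𝓕 : Set (Set U)) (E : Set U) : Prop :=
  ∀ K : Set U, K.Finite → K ⊆ E →
    ∃ F ∈ 𝓕, K ⊆ upp R F ∧ upp R F ⊆ E ∧ F ⊆ E

/-- The join saturation `𝓕^♯`: all unions of nonempty finite subfamilies of `𝓕`. -/
def joinSat {U : Type*} (𝓕 : Set (Set U)) : Set (Set U) :=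
  {A | ∃ 𝓐 : Set (Set U), 𝓐 ⊆ 𝓕 ∧ 𝓐.Finite ∧ 𝓐.Nonempty ∧ A = ⋃₀ 𝓐}

/-- `S(M, F)`: the set of `G ∈ 𝓕` satisfying (sL-1) and (sL-2). -/
def SFam {U : Type*} (R : U → U → Prop) (𝓕 : Set (Set U)) (M F : Set U) : Set (Set U) :=
  {G | G ∈ 𝓕 ∧ upp R M ⊆ upp R G ∧ upp R G ⊆ upp R F ∧
    ∀ G' ∈ 𝓕, upp R M ⊆ upp R G' → upp R G' ⊆ upp R F → upp R G ⊆ upp R G'}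

/-- `S*(M, F) = {G ∈ S(M, F) | G ⊆ upp R F}`. -/
def SStar {U : Type*} (R : U → U → Prop) (𝓕 : Set (Set U)) (M F : Set U) : Set (Set U) :=
  {G | G ∈ SFam R 𝓕 M F ∧ G ⊆ upp R F}

/-- sL-approximation space. -/
def IsSLApprox {U : Type*} (R : U → U → Prop) (𝓕 : Set (Set U)) : Prop :=
  IsCFApprox R 𝓕 ∧
    ∀ M ∈ joinSat 𝓕, ∀ F ∈ 𝓕, M ⊆ upp R F → (SFam R 𝓕 M F).Nonempty

/-- L-approximation space. -/
def IsLApprox {U : Type*} (R : U → U → Prop) (𝓕 : Set (Set U)) : Prop :=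
  IsCFApprox R 𝓕 ∧
    ∀ M ∈ joinSat 𝓕 ∪ {(∅ : Set U)}, ∀ F ∈ 𝓕, M ⊆ upp R F → (SFam R 𝓕 M F).Nonempty

/-- bc-approximation space. -/
def IsBCApprox {U : Type*} (R : U → U → Prop) (𝓕 : Set (Set U)) : Prop :=
  IsCFApprox R 𝓕 ∧
    ∀ M ∈ joinSat 𝓕 ∪ {(∅ : Set U)}, ∀ F ∈ 𝓕, M ⊆ upp R F →
      ∃ G ∈ 𝓕, upp R M ⊆ upp R G ∧ upp R G ⊆ upp R F ∧
        ∀ G' ∈ 𝓕, upp R M ⊆ upp R G' → upp R G ⊆ upp R G'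

/-- A dcpo: every (nonempty) directed subset has a supremum. -/
def IsDcpo (P : Type*) [PartialOrder P] : Prop :=
  ∀ D : Set P, D.Nonempty → DirectedOn (· ≤ ·) D → ∃ s, IsLUB D s

/-- The way-below relation `x ≪ y`. -/
def WayBelow {P : Type*} [PartialOrder P] (x y : P) : Prop :=
  ∀ D : Set P, D.Nonempty → DirectedOn (· ≤ ·) D →
    ∀ s, IsLUB D s → y ≤ s → ∃ d ∈ D, x ≤ d

/-- Continuous domain: a dcpo in which for every `x` the set `{z | z ≪ x}` is
directed with supremum `x`. -/
def IsContinuousDomain (P : Type*) [PartialOrder P] : Prop :=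
  IsDcpo P ∧ ∀ x : P, {z | WayBelow z x}.Nonempty ∧
    DirectedOn (· ≤ ·) {z | WayBelow z x} ∧ IsLUB {z | WayBelow z x} x

/-- Algebraic domain: a dcpo in which for every `x` the set `↓x ∩ K(P)` is
directed with supremum `x`. -/
def IsAlgebraicDomain (P : Type*) [PartialOrder P] : Prop :=
  IsDcpo P ∧ ∀ x : P, ({k | k ≤ x ∧ WayBelow k k}).Nonempty ∧
    DirectedOn (· ≤ ·) {k | k ≤ x ∧ WayBelow k k} ∧
    IsLUB {k | k ≤ x ∧ WayBelow k k} x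

/-- sL-domain: a continuous domain in which every principal ideal is a
sup-semilattice. -/
def IsSLDomain (P : Type*) [PartialOrder P] : Prop :=
  IsContinuousDomain P ∧ ∀ x a b : P, a ≤ x → b ≤ x →
    ∃ s, s ≤ x ∧ a ≤ s ∧ b ≤ s ∧ ∀ t, t ≤ x → a ≤ t → b ≤ t → s ≤ t

/-- L-domain: a continuous domain in which every principal ideal is a
complete lattice (every subset of `↓x` has a least upper bound in `↓x`). -/
def IsLDomain (P : Type*) [PartialOrder P] : Prop :=
  IsContinuousDomain P ∧ ∀ (x : P) (A : Set P), (∀ a ∈ A, a ≤ x) →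
    ∃ s, s ≤ x ∧ (∀ a ∈ A, a ≤ s) ∧ ∀ t, t ≤ x → (∀ a ∈ A, a ≤ t) → s ≤ t

/-- bc-domain: a continuous domain in which every up-bounded subset has a
supremum. -/
def IsBCDomain (P : Type*) [PartialOrder P] : Prop :=
  IsContinuousDomain P ∧ ∀ A : Set P, (∃ b, ∀ a ∈ A, a ≤ b) → ∃ s, IsLUB A s

/-!
Directed suprema of CF-closed sets are unions, and every CF-closed set `E` is the directed union
of the sets `R̄(F)` with `F ∈ 𝓕`, `F ⊆ E`; since such an `F` is finite, `R̄(F)` is way below `E`.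
For an up-bounded family `A`, the bc-condition attaches to every finite union `M` of members of `𝓕`
lying in `⋃ A` a least cover `R̄(G) ⊇ R̄(M)`. These least covers grow with `M`, so they form a
directed family, and its union is the least CF-closed set containing every member of `A`.
-/

section

variable {U : Type*} {R : U → U → Prop} {𝓕 : Set (Set U)}

abbrev CFClosedSets (R : U → U → Prop) (𝓕 : Set (Set U)) : Type _ := {E : Set U // CFClosed R 𝓕 E}

lemma upp_mono {A B : Set U} (h : A ⊆ B) : upp R A ⊆ upp R B :=
  fun _ ⟨y, hy, hxy⟩ => ⟨y, h hy, hxy⟩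

lemma upp_subset_of_subset_upp (ht : Transitive R) {A B : Set U} (h : A ⊆ upp R B) :
    upp R A ⊆ upp R B := by
  rintro x ⟨y, hy, hxy⟩
  obtain ⟨z, hz, hyz⟩ := h hy
  exact ⟨z, hz, ht hxy hyz⟩

lemma CFClosed.upp_subset (ht : Transitive R) {E K : Set U} (hE : CFClosed R 𝓕 E)
    (hK : K.Finite) (hKE : K ⊆ E) : upp R K ⊆ E := by
  obtain ⟨F, -, hKF, hFE, -⟩ := hE K hK hKE
  exact (upp_subset_of_subset_upp ht hKF).trans hFE

lemma cfClosed_upp (hCF : IsCFApprox R 𝓕) {F : Set U} (hF : F ∈ 𝓕) : CFClosed R 𝓕 (upp R F) := by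
  intro K hK hKF
  obtain ⟨G, hG, hKG, hGF⟩ := hCF.2.2.2 F hF K hK hKF
  exact ⟨G, hG, hKG, upp_subset_of_subset_upp hCF.1 hGF, hGF⟩

lemma IsCFApprox.finite_sUnion (hCF : IsCFApprox R 𝓕) {𝓐 : Set (Set U)} (h𝓐 : 𝓐 ⊆ 𝓕)
    (hfin : 𝓐.Finite) : (⋃₀ 𝓐).Finite :=
  hfin.sUnion fun F hF => hCF.2.2.1 F (h𝓐 hF)

lemma CFClosed.sUnion_of_directedOn {𝓓 : Set (Set U)} (hne : 𝓓.Nonempty)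
    (hdir : DirectedOn (· ⊆ ·) 𝓓) (h𝓓 : ∀ E ∈ 𝓓, CFClosed R 𝓕 E) : CFClosed R 𝓕 (⋃₀ 𝓓) := by
  intro K hK hK𝓓
  obtain ⟨E, hE, hKE⟩ := hdir.exists_mem_subset_of_finite_of_subset_sUnion hne hK hK𝓓
  obtain ⟨F, hF, hKF, hFE, hFE'⟩ := h𝓓 E hE K hK hKE
  exact ⟨F, hF, hKF, hFE.trans (subset_sUnion_of_mem hE), hFE'.trans (subset_sUnion_of_mem hE)⟩

lemma isLUB_sUnion_image_val {α : Type*} {p : Set α → Prop} {D : Set (Subtype p)}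
    (h : p (⋃₀ (Subtype.val '' D))) : IsLUB D ⟨⋃₀ (Subtype.val '' D), h⟩ :=
  ⟨fun _ hd => subset_sUnion_of_mem (mem_image_of_mem _ hd),
    fun _ ht => sUnion_subset <| by rintro _ ⟨d, hd, rfl⟩; exact ht hd⟩

lemma cfClosed_sUnion_image_val {D : Set (CFClosedSets R 𝓕)} (hne : D.Nonempty)
    (hdir : DirectedOn (· ≤ ·) D) :
    CFClosed R 𝓕 (⋃₀ (Subtype.val '' D)) :=
  CFClosed.sUnion_of_directedOn (hne.image _) (hdir.mono_comp fun _ _ h => h)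
    (by rintro _ ⟨d, -, rfl⟩; exact d.2)

lemma isDcpo_cfClosedSets : IsDcpo (CFClosedSets R 𝓕) := fun _ hne hdir =>
  ⟨_, isLUB_sUnion_image_val (cfClosed_sUnion_image_val hne hdir)⟩

section WayBelow

variable {P : Type*} [PartialOrder P]

lemma WayBelow.le {x y : P} (h : WayBelow x y) : x ≤ y := by
  obtain ⟨d, rfl, hd⟩ :=
    h {y} (singleton_nonempty y) (directedOn_singleton y) y isLUB_singleton le_rfl
  exact hd

lemma isContinuousDomain_of_basis (hP : IsDcpo P)
    (hB : ∀ x : P, ∃ B : Set P, B.Nonempty ∧ DirectedOn (· ≤ ·) B ∧ IsLUB B x ∧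
      ∀ b ∈ B, WayBelow b x) : IsContinuousDomain P := by
  refine ⟨hP, fun x => ?_⟩
  obtain ⟨B, hne, hdir, hlub, hwb⟩ := hB x
  refine ⟨hne.mono hwb, ?_, fun _ hz => hz.le, fun _ ht => hlub.2 fun b hb => ht (hwb b hb)⟩
  intro z₁ hz₁ z₂ hz₂
  obtain ⟨b₁, hb₁, hzb₁⟩ := hz₁ B hne hdir x hlub le_rfl
  obtain ⟨b₂, hb₂, hzb₂⟩ := hz₂ B hne hdir x hlub le_rfl
  obtain ⟨b, hb, hb₁b, hb₂b⟩ := hdir b₁ hb₁ b₂ hb₂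
  exact ⟨b, hwb b hb, hzb₁.trans hb₁b, hzb₂.trans hb₂b⟩

end WayBelow

def uppBasis (R : U → U → Prop) (𝓕 : Set (Set U)) (E : Set U) : Set (CFClosedSets R 𝓕) :=
  {d | ∃ F ∈ 𝓕, F ⊆ E ∧ d.1 = upp R F}

section Continuity

variable (hCF : IsCFApprox R 𝓕) (E : CFClosedSets R 𝓕)
include hCF

lemma uppBasis_nonempty : (uppBasis R 𝓕 E).Nonempty := by
  obtain ⟨F, hF, -, -, hFE⟩ := E.2 ∅ finite_empty (empty_subset _)
  exact ⟨⟨upp R F, cfClosed_upp hCF hF⟩, F, hF, hFE, rfl⟩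

lemma uppBasis_directedOn : DirectedOn (· ≤ ·) (uppBasis R 𝓕 E) := by
  rintro ⟨_, -⟩ ⟨F₁, hF₁, hF₁E, rfl⟩ ⟨_, -⟩ ⟨F₂, hF₂, hF₂E, rfl⟩
  obtain ⟨G, hG, hFG, -, hGE⟩ := E.2 (F₁ ∪ F₂) ((hCF.2.2.1 F₁ hF₁).union (hCF.2.2.1 F₂ hF₂))
    (union_subset hF₁E hF₂E)
  refine ⟨⟨upp R G, cfClosed_upp hCF hG⟩, ⟨G, hG, hGE, rfl⟩, ?_, ?_⟩
  · exact upp_subset_of_subset_upp hCF.1 (subset_union_left.trans hFG)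
  · exact upp_subset_of_subset_upp hCF.1 (subset_union_right.trans hFG)

lemma isLUB_uppBasis : IsLUB (uppBasis R 𝓕 E) E := by
  refine ⟨?_, fun t ht x hx => ?_⟩
  · rintro ⟨_, -⟩ ⟨F, hF, hFE, rfl⟩
    exact E.2.upp_subset hCF.1 (hCF.2.2.1 F hF) hFE
  · obtain ⟨F, hF, hxF, -, hFE⟩ := E.2 {x} (finite_singleton x) (singleton_subset_iff.2 hx)
    exact ht (a := ⟨upp R F, cfClosed_upp hCF hF⟩) ⟨F, hF, hFE, rfl⟩ (hxF rfl)

lemma wayBelow_of_mem_uppBasis {d : CFClosedSets R 𝓕} (hd : d ∈ uppBasis R 𝓕 E) : WayBelow d E := by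
  obtain ⟨F, hF, hFE, hdF⟩ := hd
  intro D hne hdir s hs hEs
  have hsD : s.1 = ⋃₀ (Subtype.val '' D) :=
    congrArg Subtype.val (hs.unique (isLUB_sUnion_image_val (cfClosed_sUnion_image_val hne hdir)))
  obtain ⟨_, ⟨e, he, rfl⟩, hFe⟩ :=
    (hdir.mono_comp (g := Subtype.val) fun _ _ h => h).exists_mem_subset_of_finite_of_subset_sUnion
      (hne.image _) (hCF.2.2.1 F hF) (hsD ▸ hFE.trans hEs)
  exact ⟨e, he, show d.1 ⊆ e.1 from hdF ▸ e.2.upp_subset hCF.1 (hCF.2.2.1 F hF) hFe⟩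

end Continuity

theorem isContinuousDomain_cfClosedSets (hCF : IsCFApprox R 𝓕) :
    IsContinuousDomain (CFClosedSets R 𝓕) :=
  isContinuousDomain_of_basis isDcpo_cfClosedSets fun E =>
    ⟨uppBasis R 𝓕 E, uppBasis_nonempty hCF E, uppBasis_directedOn hCF E, isLUB_uppBasis hCF E,
      fun _ => wayBelow_of_mem_uppBasis hCF E⟩

def IsLeastCover (R : U → U → Prop) (𝓕 : Set (Set U)) (M G : Set U) : Prop :=
  G ∈ 𝓕 ∧ upp R M ⊆ upp R G ∧ ∀ G' ∈ 𝓕, upp R M ⊆ upp R G' → upp R G ⊆ upp R G'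

lemma IsLeastCover.upp_subset_upp_of_subset {M M' G G' : Set U} (hG : IsLeastCover R 𝓕 M G)
    (hG' : IsLeastCover R 𝓕 M' G') (h : M ⊆ M') : upp R G ⊆ upp R G' :=
  hG.2.2 G' hG'.1 ((upp_mono h).trans hG'.2.1)

lemma IsLeastCover.upp_subset (ht : Transitive R) {M G E : Set U} (hG : IsLeastCover R 𝓕 M G)
    (hE : CFClosed R 𝓕 E) (hM : M.Finite) (hME : M ⊆ E) : upp R G ⊆ E := by
  obtain ⟨F, hF, hMF, hFE, -⟩ := hE M hM hME
  exact (hG.2.2 F hF (upp_subset_of_subset_upp ht hMF)).trans hFE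

lemma sUnion_mem_joinSat_union_empty {𝓐 : Set (Set U)} (h𝓐 : 𝓐 ⊆ 𝓕) (hfin : 𝓐.Finite) :
    ⋃₀ 𝓐 ∈ joinSat 𝓕 ∪ {∅} := by
  rcases 𝓐.eq_empty_or_nonempty with rfl | hne
  · exact Or.inr sUnion_empty
  · exact Or.inl ⟨𝓐, h𝓐, hfin, hne, rfl⟩

lemma IsBCApprox.exists_isLeastCover (hBC : IsBCApprox R 𝓕) {𝓐 : Set (Set U)} (h𝓐 : 𝓐 ⊆ 𝓕)
    (hfin : 𝓐.Finite) {E : Set U} (hE : CFClosed R 𝓕 E) (h𝓐E : ⋃₀ 𝓐 ⊆ E) :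
    ∃ G, IsLeastCover R 𝓕 (⋃₀ 𝓐) G := by
  obtain ⟨F, hF, hMF, -, -⟩ := hE _ (hBC.1.finite_sUnion h𝓐 hfin) h𝓐E
  obtain ⟨G, hG, hMG, -, hleast⟩ := hBC.2 _ (sUnion_mem_joinSat_union_empty h𝓐 hfin) F hF hMF
  exact ⟨G, hG, hMG, hleast⟩

def leastCoverUpps (R : U → U → Prop) (𝓕 : Set (Set U)) (S : Set U) : Set (Set U) :=
  {V | ∃ 𝓐 ⊆ 𝓕, 𝓐.Finite ∧ ⋃₀ 𝓐 ⊆ S ∧ ∃ G, IsLeastCover R 𝓕 (⋃₀ 𝓐) G ∧ V = upp R G}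

lemma sUnion_leastCoverUpps_subset (hCF : IsCFApprox R 𝓕) {S E : Set U} (hE : CFClosed R 𝓕 E)
    (hSE : S ⊆ E) : ⋃₀ leastCoverUpps R 𝓕 S ⊆ E :=
  sUnion_subset <| by
    rintro _ ⟨𝓐, h𝓐, hfin, h𝓐S, G, hG, rfl⟩
    exact hG.upp_subset hCF.1 hE (hCF.finite_sUnion h𝓐 hfin) (h𝓐S.trans hSE)

section BoundedCompleteness

variable (hBC : IsBCApprox R 𝓕) {S E₀ : Set U} (hE₀ : CFClosed R 𝓕 E₀) (hSE₀ : S ⊆ E₀)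
include hBC hE₀ hSE₀

lemma exists_isLeastCover_upp_mem_leastCoverUpps {𝓐 : Set (Set U)} (h𝓐 : 𝓐 ⊆ 𝓕)
    (hfin : 𝓐.Finite) (h𝓐S : ⋃₀ 𝓐 ⊆ S) :
    ∃ G, IsLeastCover R 𝓕 (⋃₀ 𝓐) G ∧ upp R G ∈ leastCoverUpps R 𝓕 S :=
  let ⟨G, hG⟩ := hBC.exists_isLeastCover h𝓐 hfin hE₀ (h𝓐S.trans hSE₀)
  ⟨G, hG, 𝓐, h𝓐, hfin, h𝓐S, G, hG, rfl⟩

lemma leastCoverUpps_nonempty : (leastCoverUpps R 𝓕 S).Nonempty :=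
  let ⟨_, _, hmem⟩ := exists_isLeastCover_upp_mem_leastCoverUpps hBC hE₀ hSE₀ (empty_subset 𝓕)
    finite_empty (by rw [sUnion_empty]; exact empty_subset S)
  ⟨_, hmem⟩

lemma leastCoverUpps_directedOn : DirectedOn (· ⊆ ·) (leastCoverUpps R 𝓕 S) := by
  rintro _ ⟨𝓐₁, h𝓐₁, hfin₁, hS₁, G₁, hG₁, rfl⟩ _ ⟨𝓐₂, h𝓐₂, hfin₂, hS₂, G₂, hG₂, rfl⟩
  obtain ⟨G, hG, hmem⟩ := exists_isLeastCover_upp_mem_leastCoverUpps hBC hE₀ hSE₀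
    (union_subset h𝓐₁ h𝓐₂) (hfin₁.union hfin₂) (sUnion_union 𝓐₁ 𝓐₂ ▸ union_subset hS₁ hS₂)
  exact ⟨_, hmem, hG₁.upp_subset_upp_of_subset hG (sUnion_mono subset_union_left),
    hG₂.upp_subset_upp_of_subset hG (sUnion_mono subset_union_right)⟩

lemma cfClosed_sUnion_leastCoverUpps : CFClosed R 𝓕 (⋃₀ leastCoverUpps R 𝓕 S) :=
  CFClosed.sUnion_of_directedOn (leastCoverUpps_nonempty hBC hE₀ hSE₀)
    (leastCoverUpps_directedOn hBC hE₀ hSE₀)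
    (by rintro _ ⟨_, -, -, -, G, hG, rfl⟩; exact cfClosed_upp hBC.1 hG.1)

lemma subset_sUnion_leastCoverUpps {E : Set U} (hE : CFClosed R 𝓕 E) (hES : E ⊆ S) :
    E ⊆ ⋃₀ leastCoverUpps R 𝓕 S := by
  intro x hx
  obtain ⟨F, hF, hxF, -, hFE⟩ := hE {x} (finite_singleton x) (singleton_subset_iff.2 hx)
  obtain ⟨G, hG, hmem⟩ := exists_isLeastCover_upp_mem_leastCoverUpps hBC hE₀ hSE₀
    (singleton_subset_iff.2 hF) (finite_singleton F) (by rw [sUnion_singleton]; exact hFE.trans hES)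
  rw [sUnion_singleton] at hG
  exact ⟨_, hmem, hG.2.1 (hxF rfl)⟩

end BoundedCompleteness

theorem IsBCApprox.exists_isLUB (hBC : IsBCApprox R 𝓕) {A : Set (CFClosedSets R 𝓕)}
    (hA : (upperBounds A).Nonempty) : ∃ s, IsLUB A s := by
  have hS : ∀ t ∈ upperBounds A, ⋃₀ (Subtype.val '' A) ⊆ t.1 := fun t ht =>
    sUnion_subset <| by rintro _ ⟨a, ha, rfl⟩; exact ht ha
  obtain ⟨b, hb⟩ := hA
  refine ⟨⟨_, cfClosed_sUnion_leastCoverUpps hBC b.2 (hS b hb)⟩, fun a ha => ?_, fun t ht => ?_⟩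
  · exact subset_sUnion_leastCoverUpps hBC b.2 (hS b hb) a.2
      (subset_sUnion_of_mem (mem_image_of_mem _ ha))
  · exact sUnion_leastCoverUpps_subset hBC.1 t.2 (hS t ht)

end

/-- if `(U, R, 𝓕)` is a bc-approximation space, then
`(𝔠(U, R, 𝓕), ⊆)` is a bc-domain. -/
theorem stmt17 {U : Type*} (R : U → U → Prop) (𝓕 : Set (Set U))
    (hBC : IsBCApprox R 𝓕) :
    IsBCDomain {E : Set U // CFClosed R 𝓕 E} :=
  ⟨isContinuousDomain_cfClosedSets hBC.1, fun _ hA => hBC.exists_isLUB hA⟩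
end

section
/- A topological CF-approximation space (U, R, 𝓕) is an sL-approximation space if and only if the poset ({R̄(F) : F ∈ 𝓕}, ⊆) is an sL-cusl. -/
/-!
Since `upp R (⋃₀ 𝓐)` is the union of the `upp R A`, `A ∈ 𝓐`, the set `S(⋃₀ 𝓐, F)` is nonempty
exactly when these finitely many sets have a least upper bound below `upp R F` in the poset
`(upp R '' 𝓕, ⊆)`. Least upper bounds of pairs give those of all nonempty finite families by
induction; for this, transitivity of `R` turns `⋃₀ 𝓐 ⊆ upp R F` into `upp R A ⊆ upp R F`.
Conversely, reflexivity turns `upp R A, upp R B ⊆ upp R F` into `A ∪ B ⊆ upp R F`, so the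
sL-condition for `M = A ∪ B` yields the least upper bound of `upp R A` and `upp R B`.
-/

open Set

section LeastUpperBounds

variable {α : Type*} [Preorder α]

theorem isLeast_inter_Iic_inter_upperBounds_pair_iff {S : Set α} {p a b s : α} :
    IsLeast (S ∩ Iic p ∩ upperBounds {a, b}) s ↔
      s ∈ S ∧ s ≤ p ∧ a ≤ s ∧ b ≤ s ∧ ∀ t ∈ S, t ≤ p → a ≤ t → b ≤ t → s ≤ t := by
  simp only [IsLeast, lowerBounds, upperBounds_insert, upperBounds_singleton, mem_inter_iff,
    mem_Iic, mem_Ici, mem_ofPred_eq, and_imp, and_assoc]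

theorem IsLeast.inter_upperBounds_insert {C T : Set α} {s : α} (a : α)
    (h : IsLeast (C ∩ upperBounds T) s) :
    C ∩ upperBounds (insert a T) = C ∩ upperBounds {a, s} := by
  ext t
  simp only [mem_inter_iff, upperBounds_insert, upperBounds_singleton, mem_Ici]
  refine and_congr_right fun htC => and_congr_right fun _ => ⟨fun ht => h.2 ⟨htC, ht⟩, ?_⟩
  exact fun hst u hu => (h.1.2 hu).trans hst

theorem exists_isLeast_inter_upperBounds_of_finite {C : Set α}
    (hpair : ∀ a ∈ C, ∀ b ∈ C, ∃ s, IsLeast (C ∩ upperBounds {a, b}) s)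
    {T : Set α} (hT : T.Finite) (hne : T.Nonempty) (hTC : T ⊆ C) :
    ∃ s, IsLeast (C ∩ upperBounds T) s := by
  induction T, hT using Set.Finite.induction_on with
  | empty => exact absurd hne Set.not_nonempty_empty
  | @insert a T _ _ ih =>
    obtain ⟨haC, hTC⟩ := insert_subset_iff.1 hTC
    rcases T.eq_empty_or_nonempty with rfl | hT
    · simpa only [insert_empty_eq, pair_eq_singleton] using hpair a haC a haC
    obtain ⟨s, hs⟩ := ih hT hTC
    rw [hs.inter_upperBounds_insert a]
    exact hpair a haC s hs.1.1

end LeastUpperBounds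

section UpperApproximation

variable {U : Type*} {R : U → U → Prop}

theorem subset_upp (hrefl : ∀ x, R x x) (A : Set U) : A ⊆ upp R A :=
  fun x hx => ⟨x, hx, hrefl x⟩

theorem upp_subset_upp_of_subset_upp (htrans : ∀ ⦃x y z⦄, R x y → R y z → R x z)
    {A B : Set U} (h : A ⊆ upp R B) : upp R A ⊆ upp R B := by
  rintro x ⟨y, hy, hxy⟩
  obtain ⟨z, hz, hyz⟩ := h hy
  exact ⟨z, hz, htrans hxy hyz⟩

theorem upp_sUnion_subset_iff {𝓐 : Set (Set U)} {X : Set U} :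
    upp R (⋃₀ 𝓐) ⊆ X ↔ X ∈ upperBounds (upp R '' 𝓐) := by
  constructor
  · rintro h _ ⟨A, hA, rfl⟩ x ⟨y, hy, hxy⟩
    exact h ⟨y, subset_sUnion_of_mem hA hy, hxy⟩
  · rintro h x ⟨y, ⟨A, hA, hy⟩, hxy⟩
    exact h ⟨A, hA, rfl⟩ ⟨y, hy, hxy⟩

theorem sFam_sUnion_nonempty_iff {𝓕 𝓐 : Set (Set U)} {F : Set U} :
    (SFam R 𝓕 (⋃₀ 𝓐) F).Nonempty ↔
      ∃ s, IsLeast (upp R '' 𝓕 ∩ Iic (upp R F) ∩ upperBounds (upp R '' 𝓐)) s := by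
  constructor
  · rintro ⟨G, hG, hMG, hGF, hmin⟩
    refine ⟨upp R G, ⟨⟨⟨G, hG, rfl⟩, hGF⟩, upp_sUnion_subset_iff.1 hMG⟩, ?_⟩
    rintro _ ⟨⟨⟨G', hG', rfl⟩, hG'F⟩, hub⟩
    exact hmin G' hG' (upp_sUnion_subset_iff.2 hub) hG'F
  · rintro ⟨_, ⟨⟨⟨G, hG, rfl⟩, hGF⟩, hub⟩, hmin⟩
    exact ⟨G, hG, upp_sUnion_subset_iff.2 hub, hGF, fun G' hG' hMG' hG'F =>
      hmin ⟨⟨⟨G', hG', rfl⟩, hG'F⟩, upp_sUnion_subset_iff.1 hMG'⟩⟩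

end UpperApproximation

/-- a topological CF-approximation space is an sL-approximation
space iff `({upp R F | F ∈ 𝓕}, ⊆)` is an sL-cusl. -/
theorem stmt19 {U : Type*} (R : U → U → Prop) (𝓕 : Set (Set U))
    (hCF : IsCFApprox R 𝓕) (hrefl : Reflexive R) :
    IsSLApprox R 𝓕 ↔
    ∀ p ∈ upp R '' 𝓕, ∀ a ∈ upp R '' 𝓕, ∀ b ∈ upp R '' 𝓕,
      a ⊆ p → b ⊆ p →
      ∃ s ∈ upp R '' 𝓕, s ⊆ p ∧ a ⊆ s ∧ b ⊆ s ∧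
        ∀ t ∈ upp R '' 𝓕, t ⊆ p → a ⊆ t → b ⊆ t → s ⊆ t := by
  simp only [← isLeast_inter_Iic_inter_upperBounds_pair_iff]
  rw [IsSLApprox, and_iff_right hCF]
  constructor
  · rintro hsL _ ⟨F, hF, rfl⟩ _ ⟨A, hA, rfl⟩ _ ⟨B, hB, rfl⟩ hAF hBF
    have hM : ⋃₀ {A, B} ∈ joinSat 𝓕 :=
      ⟨{A, B}, pair_subset hA hB, toFinite _, insert_nonempty _ _, rfl⟩
    have hMF : ⋃₀ {A, B} ⊆ upp R F := by
      rw [sUnion_pair]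
      exact union_subset ((subset_upp hrefl A).trans hAF) ((subset_upp hrefl B).trans hBF)
    simpa only [sFam_sUnion_nonempty_iff, image_pair] using hsL _ hM F hF hMF
  · rintro hsup _ ⟨𝓐, h𝓐, hfin, hne, rfl⟩ F hF hMF
    rw [sFam_sUnion_nonempty_iff]
    refine exists_isLeast_inter_upperBounds_of_finite ?_ (hfin.image _) (hne.image _) ?_
    · rintro a ⟨ha, haF⟩ b ⟨hb, hbF⟩
      exact hsup _ ⟨F, hF, rfl⟩ a ha b hb haF hbF
    · rintro _ ⟨A, hA, rfl⟩
      exact ⟨⟨A, h𝓐 hA, rfl⟩,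
        upp_subset_upp_of_subset_upp hCF.1 ((subset_sUnion_of_mem hA).trans hMF)⟩
end
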